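/- Front spinning of a cobordism preserves immersions (from the proof of Proposition 1.4): let n ≥ 1, let E be a real normed vector space, and let g : E → ℝ × ℝ^{2n+1} have component functions t, x_1, y_1, …, x_n, y_n, z, each differentiable at p ∈ E. If the derivative Dg(p) : E → ℝ × ℝ^{2n+1} is injective and x_1(p) ≠ 0, then for every θ ∈ ℝ the derivative D(Σg)(p,θ) : E × ℝ → ℝ × ℝ^{2n+3} of the front-spun map is injective. -/

import Mathlib

/-!
Front spinning of a cobordism preserves immersions.

A map `g : E → ℝ × ℝ^{2n+1}` with component functions
`t, x_1, y_1, …, x_n, y_n, z` is bundled as a map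
`E → ℝ × (Fin n → ℝ) × (Fin n → ℝ) × ℝ` (the `t`-coordinate, the
`x`-coordinates, the `y`-coordinates and the `z`-coordinate); similarly the
front-spun map `Σg : E × ℝ → ℝ × ℝ^{2n+3}` is bundled as a map
`E × ℝ → ℝ × (Fin (n+1) → ℝ) × (Fin (n+1) → ℝ) × ℝ`, with component functions
`T = t`, `X_0 = x_1 sin θ`, `Y_0 = y_1 sin θ`, `X_1 = x_1 cos θ`,
`Y_1 = y_1 cos θ`, `X_i = x_i`, `Y_i = y_i` for `i ≥ 2`, and `Z = z`.
-/

/-- The `x`-component functions of the front-spun map. -/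
noncomputable def spinX {E : Type*} (x : ℕ → E → ℝ) : ℕ → E × ℝ → ℝ
  | 0 => fun q => x 1 q.1 * Real.sin q.2
  | 1 => fun q => x 1 q.1 * Real.cos q.2
  | (i + 2) => fun q => x (i + 2) q.1

/-- The `y`-component functions of the front-spun map. -/
noncomputable def spinY {E : Type*} (y : ℕ → E → ℝ) : ℕ → E × ℝ → ℝ
  | 0 => fun q => y 1 q.1 * Real.sin q.2
  | 1 => fun q => y 1 q.1 * Real.cos q.2
  | (i + 2) => fun q => y (i + 2) q.1

/-- The `z`-component function of the front-spun map. -/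
def spinZ {E : Type*} (z : E → ℝ) : E × ℝ → ℝ := fun q => z q.1

/-- The `t`-component function of the front-spun cobordism. -/
def spinT {E : Type*} (t : E → ℝ) : E × ℝ → ℝ := fun q => t q.1

/-- The map `g : E → ℝ × ℝ^{2n+1}` bundled from its component functions
`t, x_1, …, x_n, y_1, …, y_n, z`. -/
def bundleCob {E : Type*} (n : ℕ) (t : E → ℝ) (x y : ℕ → E → ℝ) (z : E → ℝ) :
    E → ℝ × (Fin n → ℝ) × (Fin n → ℝ) × ℝ :=
  fun p => (t p, fun i => x ((i : ℕ) + 1) p, fun i => y ((i : ℕ) + 1) p, z p)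

/-- The front-spun map `Σg : E × ℝ → ℝ × ℝ^{2n+3}` bundled from its component
functions `T, X_0, …, X_n, Y_0, …, Y_n, Z`. -/
noncomputable def spinBundleCob {E : Type*} (n : ℕ) (t : E → ℝ) (x y : ℕ → E → ℝ)
    (z : E → ℝ) : E × ℝ → ℝ × (Fin (n + 1) → ℝ) × (Fin (n + 1) → ℝ) × ℝ :=
  fun q => (spinT t q, fun i => spinX x (i : ℕ) q, fun i => spinY y (i : ℕ) q, spinZ z q)

/-! At `(p, θ)` the components `X_0, X_1` of `D(Σg)(v, s)` are an orthogonal transformation of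
`(Dx_1(p) v, x_1(p) s)`, and similarly for `Y_0, Y_1`; all other components are those of
`Dg(p) v`. Hence a kernel vector has `Dg(p) v = 0` and `x_1(p) s = 0`, so `v = 0` and `s = 0`. -/

open Finset

section ProdPi

variable {𝕜 : Type*} [NontriviallyNormedField 𝕜] {M : Type*} [NormedAddCommGroup M]
  [NormedSpace 𝕜 M] {F : Type*} [NormedAddCommGroup F] [NormedSpace 𝕜 F]
  {G : Type*} [NormedAddCommGroup G] [NormedSpace 𝕜 G] {ι : Type*} [Fintype ι]

theorem fderiv_prodMk_pi_pi_apply {a : M → F} {d : M → G} {b c : ι → M → 𝕜} {q : M}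
    (ha : DifferentiableAt 𝕜 a q) (hb : ∀ i, DifferentiableAt 𝕜 (b i) q)
    (hc : ∀ i, DifferentiableAt 𝕜 (c i) q) (hd : DifferentiableAt 𝕜 d q) (w : M) :
    fderiv 𝕜 (fun q => (a q, fun i => b i q, fun i => c i q, d q)) q w =
      (fderiv 𝕜 a q w, fun i => fderiv 𝕜 (b i) q w, fun i => fderiv 𝕜 (c i) q w,
        fderiv 𝕜 d q w) := by
  rw [ha.fderiv_prodMk ((differentiableAt_pi.2 hb).prodMk
      ((differentiableAt_pi.2 hc).prodMk hd)),
    (differentiableAt_pi.2 hb).fderiv_prodMk ((differentiableAt_pi.2 hc).prodMk hd),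
    (differentiableAt_pi.2 hc).fderiv_prodMk hd, fderiv_pi hb, fderiv_pi hc]
  rfl

theorem HasFDerivAt.fst' {f : M → G} {f' : M →L[𝕜] G} {p : M} (hf : HasFDerivAt f f' p)
    (y : F) : HasFDerivAt (fun q : M × F => f q.1) (f'.comp (.fst 𝕜 M F)) (p, y) :=
  hf.comp (p, y) hasFDerivAt_fst

theorem fderiv_comp_fst_apply {f : M → G} {p : M} (hf : DifferentiableAt 𝕜 f p) (y : F)
    (v : M) (w : F) : fderiv 𝕜 (fun q : M × F => f q.1) (p, y) (v, w) = fderiv 𝕜 f p v := by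
  rw [(hf.hasFDerivAt.fst' y).fderiv]
  rfl

end ProdPi

theorem eq_zero_of_rotate_eq_zero {u w θ : ℝ} (h₀ : u * Real.sin θ + w * Real.cos θ = 0)
    (h₁ : u * Real.cos θ - w * Real.sin θ = 0) : u = 0 ∧ w = 0 := by
  have hsc := Real.sin_sq_add_cos_sq θ
  constructor
  · linear_combination Real.sin θ * h₀ + Real.cos θ * h₁ - u * hsc
  · linear_combination Real.cos θ * h₀ - Real.sin θ * h₁ - w * hsc

section Spin

variable {E : Type*} [NormedAddCommGroup E] [NormedSpace ℝ E] {x : ℕ → E → ℝ} {p : E}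

omit [NormedAddCommGroup E] [NormedSpace ℝ E] in
theorem spinY_eq_spinX : @spinY E = @spinX E := by
  funext y i
  rcases i with _ | _ | i <;> rfl

theorem fderiv_spinX_zero_apply (hx : DifferentiableAt ℝ (x 1) p) (θ : ℝ) (v : E) (s : ℝ) :
    fderiv ℝ (spinX x 0) (p, θ) (v, s) =
      fderiv ℝ (x 1) p v * Real.sin θ + x 1 p * s * Real.cos θ := by
  have hsin : HasFDerivAt (fun q : E × ℝ => Real.sin q.2) _ (p, θ) :=
    HasFDerivAt.comp (p, θ) (g := Real.sin) (Real.hasDerivAt_sin θ).hasFDerivAt hasFDerivAt_snd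
  have h : HasFDerivAt (spinX x 0) _ (p, θ) := (hx.hasFDerivAt.fst' θ).mul hsin
  rw [h.fderiv]
  simp only [add_apply, smul_apply,
    ContinuousLinearMap.comp_apply, ContinuousLinearMap.coe_fst', ContinuousLinearMap.coe_snd',
    ContinuousLinearMap.toSpanSingleton_apply, smul_eq_mul]
  ring

theorem fderiv_spinX_one_apply (hx : DifferentiableAt ℝ (x 1) p) (θ : ℝ) (v : E) (s : ℝ) :
    fderiv ℝ (spinX x 1) (p, θ) (v, s) =
      fderiv ℝ (x 1) p v * Real.cos θ - x 1 p * s * Real.sin θ := by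
  have hcos : HasFDerivAt (fun q : E × ℝ => Real.cos q.2) _ (p, θ) :=
    HasFDerivAt.comp (p, θ) (g := Real.cos) (Real.hasDerivAt_cos θ).hasFDerivAt hasFDerivAt_snd
  have h : HasFDerivAt (spinX x 1) _ (p, θ) := (hx.hasFDerivAt.fst' θ).mul hcos
  rw [h.fderiv]
  simp only [add_apply, smul_apply,
    ContinuousLinearMap.comp_apply, ContinuousLinearMap.coe_fst', ContinuousLinearMap.coe_snd',
    ContinuousLinearMap.toSpanSingleton_apply, smul_eq_mul]
  ring

theorem fderiv_spinX_add_two_apply {k : ℕ} (hx : DifferentiableAt ℝ (x (k + 2)) p) (θ : ℝ)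
    (v : E) (s : ℝ) : fderiv ℝ (spinX x (k + 2)) (p, θ) (v, s) = fderiv ℝ (x (k + 2)) p v :=
  fderiv_comp_fst_apply hx θ v s

theorem differentiableAt_spinX {n : ℕ} (hn : 1 ≤ n)
    (hx : ∀ i ∈ Icc 1 n, DifferentiableAt ℝ (x i) p) (θ : ℝ) (i : Fin (n + 1)) :
    DifferentiableAt ℝ (spinX x i) (p, θ) := by
  have hx1 : DifferentiableAt ℝ (x 1) p := hx 1 (mem_Icc.2 ⟨le_rfl, hn⟩)
  obtain ⟨_ | _ | k, hk⟩ := i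
  · show DifferentiableAt ℝ (fun q : E × ℝ => x 1 q.1 * Real.sin q.2) (p, θ)
    fun_prop
  · show DifferentiableAt ℝ (fun q : E × ℝ => x 1 q.1 * Real.cos q.2) (p, θ)
    fun_prop
  · show DifferentiableAt ℝ (fun q : E × ℝ => x (k + 2) q.1) (p, θ)
    have := hx (k + 2) (mem_Icc.2 ⟨by omega, by omega⟩)
    fun_prop

theorem fderiv_apply_eq_zero_of_fderiv_spinX_apply_eq_zero {n : ℕ} (hn : 1 ≤ n)
    (hx : ∀ i ∈ Icc 1 n, DifferentiableAt ℝ (x i) p) {θ : ℝ} {v : E} {s : ℝ}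
    (h : ∀ i : Fin (n + 1), fderiv ℝ (spinX x i) (p, θ) (v, s) = 0) :
    (∀ i : Fin n, fderiv ℝ (x (i + 1)) p v = 0) ∧ x 1 p * s = 0 := by
  have hx1 : DifferentiableAt ℝ (x 1) p := hx 1 (mem_Icc.2 ⟨le_rfl, hn⟩)
  have h₀ := h ⟨0, by omega⟩
  have h₁ := h ⟨1, by omega⟩
  rw [Fin.val_mk, fderiv_spinX_zero_apply hx1] at h₀
  rw [Fin.val_mk, fderiv_spinX_one_apply hx1] at h₁
  obtain ⟨hdx1, hs⟩ := eq_zero_of_rotate_eq_zero h₀ h₁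
  refine ⟨fun ⟨i, hi⟩ => ?_, hs⟩
  rcases i with _ | k
  · exact hdx1
  · rw [← fderiv_spinX_add_two_apply (hx (k + 2) (mem_Icc.2 ⟨by omega, by omega⟩)) θ v s]
    exact h ⟨k + 2, by omega⟩

variable {n : ℕ} {t z : E → ℝ} {y : ℕ → E → ℝ}

theorem fderiv_bundleCob_apply (ht : DifferentiableAt ℝ t p)
    (hx : ∀ i ∈ Icc 1 n, DifferentiableAt ℝ (x i) p)
    (hy : ∀ i ∈ Icc 1 n, DifferentiableAt ℝ (y i) p) (hz : DifferentiableAt ℝ z p) (v : E) :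
    fderiv ℝ (bundleCob n t x y z) p v =
      (fderiv ℝ t p v, fun i : Fin n => fderiv ℝ (x (i + 1)) p v,
        fun i : Fin n => fderiv ℝ (y (i + 1)) p v, fderiv ℝ z p v) :=
  fderiv_prodMk_pi_pi_apply ht (fun i => hx _ (mem_Icc.2 ⟨by omega, by omega⟩))
    (fun i => hy _ (mem_Icc.2 ⟨by omega, by omega⟩)) hz v

theorem fderiv_spinBundleCob_apply (hn : 1 ≤ n) (ht : DifferentiableAt ℝ t p)
    (hx : ∀ i ∈ Icc 1 n, DifferentiableAt ℝ (x i) p)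
    (hy : ∀ i ∈ Icc 1 n, DifferentiableAt ℝ (y i) p) (hz : DifferentiableAt ℝ z p)
    (θ : ℝ) (v : E) (s : ℝ) :
    fderiv ℝ (spinBundleCob n t x y z) (p, θ) (v, s) =
      (fderiv ℝ t p v, fun i : Fin (n + 1) => fderiv ℝ (spinX x i) (p, θ) (v, s),
        fun i : Fin (n + 1) => fderiv ℝ (spinY y i) (p, θ) (v, s), fderiv ℝ z p v) := by
  rw [← fderiv_comp_fst_apply ht θ v s, ← fderiv_comp_fst_apply hz θ v s]
  exact fderiv_prodMk_pi_pi_apply (ht.hasFDerivAt.fst' θ).differentiableAt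
    (differentiableAt_spinX hn hx θ) (spinY_eq_spinX ▸ differentiableAt_spinX hn hy θ)
    (hz.hasFDerivAt.fst' θ).differentiableAt (v, s)

end Spin

/-- **Front spinning of a cobordism preserves immersions.**
If the component functions of `g` are differentiable at `p`, the derivative
`Dg(p) : E → ℝ × ℝ^{2n+1}` is injective and `x_1(p) ≠ 0`, then for every `θ`
the derivative `D(Σg)(p,θ) : E × ℝ → ℝ × ℝ^{2n+3}` is injective. -/
theorem front_spinning_cobordism_preserves_immersion
    {E : Type*} [NormedAddCommGroup E] [NormedSpace ℝ E]
    (n : ℕ) (hn : 1 ≤ n) (t : E → ℝ) (x y : ℕ → E → ℝ) (z : E → ℝ) (p : E)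
    (ht : DifferentiableAt ℝ t p)
    (hx : ∀ i ∈ Finset.Icc 1 n, DifferentiableAt ℝ (x i) p)
    (hy : ∀ i ∈ Finset.Icc 1 n, DifferentiableAt ℝ (y i) p)
    (hz : DifferentiableAt ℝ z p)
    (hinj : Function.Injective (fderiv ℝ (bundleCob n t x y z) p))
    (hx1 : x 1 p ≠ 0) :
    ∀ θ : ℝ, Function.Injective (fderiv ℝ (spinBundleCob n t x y z) (p, θ)) := by
  intro θ
  rw [injective_iff_map_eq_zero]
  rintro ⟨v, s⟩ h
  simp only [fderiv_spinBundleCob_apply hn ht hx hy hz, Prod.mk_eq_zero, funext_iff,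
    Pi.zero_apply] at h
  obtain ⟨hT, hX, hY, hZ⟩ := h
  obtain ⟨hXv, hs⟩ := fderiv_apply_eq_zero_of_fderiv_spinX_apply_eq_zero hn hx hX
  rw [spinY_eq_spinX] at hY
  obtain ⟨hYv, -⟩ := fderiv_apply_eq_zero_of_fderiv_spinX_apply_eq_zero hn hy hY
  have hv : v = 0 := (injective_iff_map_eq_zero _).1 hinj v <| by
    simp only [fderiv_bundleCob_apply ht hx hy hz, hT, hXv, hYv, hZ]
    rfl
  simp [hv, (mul_eq_zero.1 hs).resolve_left hx1]
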